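/- Let M > 0 and let f : ℝ^d → ℝ satisfy |f(z) − f(z′)| ≤ M (1 + |z| + |z′|) |z − z′| for all z, z′ ∈ ℝ^d. Then for every n ∈ ℕ the truncated function z ↦ f(hₙ(z)) is globally Lipschitz continuous with constant M (1 + 2√d (n+1)), i.e. |f(hₙ(z)) − f(hₙ(z′))| ≤ M (1 + 2√d (n+1)) |z − z′| for all z, z′ ∈ ℝ^d. -/

import Mathlib

/-!
`h̃ₙ` is nondecreasing with slopes in `[0, 1]` and bounded by `n + 1`, so `hₙ` is `1`-Lipschitz
with range in the ball of radius `√d (n + 1)`. On that ball the local constant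
`M (1 + |z| + |z'|)` of `f` is at most `M (1 + 2√d (n + 1))`.
-/

/-- The truncation family for the identity from Section 4 of the paper. -/
noncomputable def htilde (n : ℕ) (z : ℝ) : ℝ :=
  if (n : ℝ) + 2 < z then (n : ℝ) + 1
  else if z < -((n : ℝ) + 2) then -((n : ℝ) + 1)
  else if |z| ≤ (n : ℝ) then z
  else if 0 ≤ z then (-(n : ℝ) ^ 2 + 2 * n * z - z * (z - 4)) / 4
  else ((n : ℝ) ^ 2 + 2 * n * z + z * (z + 4)) / 4

/-- The componentwise truncation `hₙ : ℝ^d → ℝ^d`, `hₙ(z) = (h̃ₙ(z₁), …, h̃ₙ(z_d))`. -/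
noncomputable def hvec (d n : ℕ) (z : EuclideanSpace ℝ (Fin d)) : EuclideanSpace ℝ (Fin d) :=
  WithLp.toLp 2 (fun i => htilde n (z i))

lemma abs_htilde_le (n : ℕ) (z : ℝ) : |htilde n z| ≤ n + 1 := by
  have hn : (0 : ℝ) ≤ n := n.cast_nonneg
  rw [abs_le, htilde]
  split_ifs <;> (try simp only [abs_le, not_and_or, not_le, not_lt] at *) <;>
    (try casesm* _ ∨ _) <;> constructor <;> nlinarith

/- On `[n, n + 2]` the quadratic piece is `n + 1 - (n + 2 - z)² / 4`, whose slope `(n + 2 - z) / 2`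
lies in `[0, 1]`; symmetrically on `[-(n + 2), -n]`. -/
lemma htilde_sub_htilde_mem_Icc (n : ℕ) {a b : ℝ} (hab : a ≤ b) :
    htilde n b - htilde n a ∈ Set.Icc 0 (b - a) := by
  have hn : (0 : ℝ) ≤ n := n.cast_nonneg
  rw [Set.mem_Icc, htilde, htilde]
  split_ifs <;> (try simp only [abs_le, not_and_or, not_le, not_lt] at *) <;>
    (try casesm* _ ∨ _) <;> constructor <;> nlinarith

lemma lipschitzWith_htilde (n : ℕ) : LipschitzWith 1 (htilde n) := by
  refine LipschitzWith.of_le_add fun a b => ?_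
  rw [Real.dist_eq]
  rcases le_total a b with hab | hba
  · linarith [(htilde_sub_htilde_mem_Icc n hab).1, abs_nonneg (a - b)]
  · linarith [(htilde_sub_htilde_mem_Icc n hba).2, le_abs_self (a - b)]

namespace EuclideanSpace

variable {ι : Type*} [Fintype ι]

lemma norm_le_sqrt_card_mul {x : EuclideanSpace ℝ ι} {C : ℝ} (hC : 0 ≤ C) (hx : ∀ i, |x i| ≤ C) :
    ‖x‖ ≤ √(Fintype.card ι) * C := by
  have hsum : ∑ i, ‖x i‖ ^ 2 ≤ Fintype.card ι * C ^ 2 := by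
    calc ∑ i, ‖x i‖ ^ 2 ≤ ∑ _i : ι, C ^ 2 :=
          Finset.sum_le_sum fun i _ => pow_le_pow_left₀ (norm_nonneg _) (hx i) 2
      _ = Fintype.card ι * C ^ 2 := by simp
  calc ‖x‖ = √(∑ i, ‖x i‖ ^ 2) := EuclideanSpace.norm_eq x
    _ ≤ √(Fintype.card ι * C ^ 2) := Real.sqrt_le_sqrt hsum
    _ = √(Fintype.card ι) * C := by rw [Real.sqrt_mul (Nat.cast_nonneg _), Real.sqrt_sq hC]

lemma lipschitzWith_toLp_comp {g : ℝ → ℝ} {K : NNReal} (hg : LipschitzWith K g) :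
    LipschitzWith K fun x : EuclideanSpace ℝ ι => WithLp.toLp 2 fun i => g (x i) := by
  refine LipschitzWith.of_dist_le_mul fun x y => ?_
  have hsq : dist (WithLp.toLp 2 fun i => g (x i)) (WithLp.toLp 2 fun i => g (y i)) ^ 2 ≤
      (K * dist x y) ^ 2 := by
    rw [PiLp.dist_sq_eq_of_L2, mul_pow, PiLp.dist_sq_eq_of_L2, Finset.mul_sum]
    refine Finset.sum_le_sum fun i _ => ?_
    rw [← mul_pow]
    exact pow_le_pow_left₀ dist_nonneg (hg.dist_le_mul (x i) (y i)) 2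
  exact le_of_sq_le_sq hsq (by positivity)

end EuclideanSpace

lemma norm_hvec_le (d n : ℕ) (z : EuclideanSpace ℝ (Fin d)) :
    ‖hvec d n z‖ ≤ √d * ((n : ℝ) + 1) := by
  simpa using EuclideanSpace.norm_le_sqrt_card_mul (by positivity) fun i => abs_htilde_le n (z i)

lemma lipschitzWith_hvec (d n : ℕ) : LipschitzWith 1 (hvec d n) :=
  EuclideanSpace.lipschitzWith_toLp_comp (lipschitzWith_htilde n)

lemma abs_sub_comp_le_of_lipschitzWith_of_norm_le {E F : Type*} [SeminormedAddCommGroup E]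
    [SeminormedAddCommGroup F] {f : F → ℝ} {g : E → F} {M R : ℝ} {K : NNReal} (hM : 0 ≤ M)
    (hf : ∀ z z', |f z - f z'| ≤ M * (1 + ‖z‖ + ‖z'‖) * ‖z - z'‖)
    (hg : LipschitzWith K g) (hgR : ∀ z, ‖g z‖ ≤ R) (z z' : E) :
    |f (g z) - f (g z')| ≤ M * (1 + 2 * R) * K * ‖z - z'‖ := by
  calc |f (g z) - f (g z')| ≤ M * (1 + ‖g z‖ + ‖g z'‖) * ‖g z - g z'‖ := hf _ _
    _ ≤ M * (1 + 2 * R) * (K * ‖z - z'‖) := by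
        have hR : 0 ≤ R := (norm_nonneg _).trans (hgR z)
        refine mul_le_mul (mul_le_mul_of_nonneg_left ?_ hM) (hg.norm_sub_le z z') (norm_nonneg _)
          (by positivity)
        linarith [hgR z, hgR z']
    _ = M * (1 + 2 * R) * K * ‖z - z'‖ := by ring

/-- If `f : ℝ^d → ℝ` satisfies the quadratic-growth local Lipschitz bound
`|f(z) − f(z′)| ≤ M (1 + |z| + |z′|) |z − z′|`, then the truncated function `f ∘ hₙ` is
globally Lipschitz with constant `M (1 + 2√d (n+1))`. -/
theorem stmt_11 (d : ℕ) (M : ℝ) (hM : 0 < M)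
    (f : EuclideanSpace ℝ (Fin d) → ℝ)
    (hf : ∀ z z' : EuclideanSpace ℝ (Fin d),
      |f z - f z'| ≤ M * (1 + ‖z‖ + ‖z'‖) * ‖z - z'‖)
    (n : ℕ) :
    ∀ z z' : EuclideanSpace ℝ (Fin d),
      |f (hvec d n z) - f (hvec d n z')| ≤
        M * (1 + 2 * Real.sqrt d * ((n : ℝ) + 1)) * ‖z - z'‖ := by
  intro z z'
  have h := abs_sub_comp_le_of_lipschitzWith_of_norm_le hM.le hf (lipschitzWith_hvec d n)
    (norm_hvec_le d n) z z'
  rwa [NNReal.coe_one, mul_one, ← mul_assoc] at h
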